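/- For every σ-invariant polynomial p ∈ ℂ[x₀,x₁,x₂] and all a, z, z' ∈ ℂ, the evaluations of p at the points (0, a, z) and (0, −a, z') of ℂ³ are equal. In particular the invariants fail to separate the disjoint closed orbits {x₀ = 0, x₁ = a} and {x₀ = 0, x₁ = −a} for a ≠ 0, and fail to separate the distinct fixed points (0,0,z) and (0,0,z'). -/

import Mathlib

/-!
An invariant `p` satisfies `p(x, y, w) = p(x, y + t x, w + 2 t y + t² x)` for every `t`.
For `x ≠ 0` the choice `t = -2y/x` gives `p(x, y, w) = p(x, -y, w)`, and for `y ≠ 0` the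
choice `t = (w' - w)/(2y)` gives `p(0, y, w) = p(0, y, w')`. Both identities are between
continuous functions of the remaining coordinate, so they survive at `x = 0`, resp. `y = 0`.
-/

open MvPolynomial

noncomputable def sigma (t : ℂ) :
    MvPolynomial (Fin 3) ℂ →ₐ[ℂ] MvPolynomial (Fin 3) ℂ :=
  aeval ![X 0, X 1 + C t * X 0, X 2 + C (2 * t) * X 1 + C (t ^ 2) * X 0]

open Filter Topology

theorem Continuous.ext_of_forall_ne {X Y : Type*} [TopologicalSpace X] [TopologicalSpace Y]
    [T2Space Y] {x₀ : X} [(𝓝[≠] x₀).NeBot] {f g : X → Y} (hf : Continuous f)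
    (hg : Continuous g) (h : ∀ x ≠ x₀, f x = g x) : f = g :=
  hf.ext_on (dense_compl_singleton x₀) hg h

theorem eval_sigma (t x y w : ℂ) (p : MvPolynomial (Fin 3) ℂ) :
    eval ![x, y, w] (sigma t p) = eval ![x, y + t * x, w + 2 * t * y + t ^ 2 * x] p := by
  rw [← aeval_eq_eval, ← aeval_eq_eval, sigma, comp_aeval_apply]
  congr 2
  ext i
  fin_cases i <;> simp

section Invariant

variable {p : MvPolynomial (Fin 3) ℂ}

theorem eval_eq_of_sigma_invariant (hp : ∀ t : ℂ, sigma t p = p) (t x y w : ℂ) :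
    eval ![x, y, w] p = eval ![x, y + t * x, w + 2 * t * y + t ^ 2 * x] p := by
  rw [← eval_sigma, hp]

theorem eval_zero_neg_eq (hp : ∀ t : ℂ, sigma t p = p) (y w : ℂ) :
    eval ![0, y, w] p = eval ![0, -y, w] p := by
  suffices h : (fun x => eval ![x, y, w] p) = fun x => eval ![x, -y, w] p from congrFun h 0
  refine Continuous.ext_of_forall_ne (x₀ := 0) ((continuous_eval p).comp (by fun_prop))
    ((continuous_eval p).comp (by fun_prop)) fun x hx => ?_
  have hy : y + -2 * y / x * x = -y := by field_simp; ring
  have hw : w + 2 * (-2 * y / x) * y + (-2 * y / x) ^ 2 * x = w := by field_simp; ring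
  simpa only [hy, hw] using eval_eq_of_sigma_invariant hp (-2 * y / x) x y w

theorem eval_zero_eq (hp : ∀ t : ℂ, sigma t p = p) (y w w' : ℂ) :
    eval ![0, y, w] p = eval ![0, y, w'] p := by
  suffices h : (fun b => eval ![0, b, w] p) = fun b => eval ![0, b, w'] p from congrFun h y
  refine Continuous.ext_of_forall_ne (x₀ := 0) ((continuous_eval p).comp (by fun_prop))
    ((continuous_eval p).comp (by fun_prop)) fun b hb => ?_
  have hw : w + 2 * ((w' - w) / (2 * b)) * b = w' := by field_simp; ring
  simpa only [mul_zero, add_zero, hw] using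
    eval_eq_of_sigma_invariant hp ((w' - w) / (2 * b)) 0 b w

end Invariant

/-- Every `σ`-invariant polynomial takes the same value at `(0, a, z)` and `(0, −a, z')`:
the invariants fail to separate the disjoint closed orbits `{x₀ = 0, x₁ = ±a}` (for `a ≠ 0`)
and fail to separate the distinct fixed points `(0,0,z)` and `(0,0,z')`. -/
theorem invariants_do_not_separate (p : MvPolynomial (Fin 3) ℂ)
    (hp : ∀ t : ℂ, sigma t p = p) (a z z' : ℂ) :
    eval ![(0 : ℂ), a, z] p = eval ![(0 : ℂ), -a, z'] p :=
  (eval_zero_neg_eq hp a z).trans (eval_zero_eq hp (-a) z z')
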